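/- Re-orthogonalization via the implicit function theorem: let p: I → ℝⁿ be a C¹ family (I an open interval), and for each (φ,θ) let n⁽¹⁾_{φ,θ}, n⁽²⁾_{φ,θ} ∈ ℝ²ⁿ depend continuously differentiably on (φ,θ), with the normalization that the 2×2 matrix of pairings of (n⁽¹⁾, n⁽²⁾) against the tangent vectors (∂_θ, ∂_φ) of the map (φ,θ) ↦ e^{iθ}p(φ) is the identity at (φ̄,θ̄). Then there exists μ₀ > 0 such that for every z̄ ∈ ℂⁿ with ‖z̄‖ < μ₀ there exist (φ̂, θ̂, ẑ) with e^{iθ̄}p(φ̄) + z̄ = e^{iθ̂}p(φ̂) + ẑ and ⟨n⁽¹⁾_{φ̂,θ̂}, ẑ⟩ = ⟨n⁽²⁾_{φ̂,θ̂}, ẑ⟩ = 0. -/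

import Mathlib

/-!
Write `ẑ(z, x) = Φ x₀ + z - Φ x` for the defect of a point `Φ x₀ + z` against the surface `Φ`.
The map `(z, x) ↦ (re ⟪N₁ x, ẑ⟫, re ⟪N₂ x, ẑ⟫)` vanishes at `(0, x₀)`, and since `ẑ(0, x₀) = 0`
its partial derivative in `x` there is `-(re ⟪N₁ x₀, ·⟫, re ⟪N₂ x₀, ·⟫) ∘ Φ'`, which for the
surface `(φ, θ) ↦ e^{iθ} p(φ)` is minus the coordinate swap by the normalization. The implicit
function theorem then solves for `x` as a function of every small `z`.
-/

open Complex Filter Topology ContinuousLinearMap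
open scoped InnerProductSpace

lemma ContinuousLinearMap.IsInvertible.neg {R M M₂ : Type*} [Ring R] [TopologicalSpace M]
    [AddCommGroup M] [Module R M] [TopologicalSpace M₂] [AddCommGroup M₂] [Module R M₂]
    [IsTopologicalAddGroup M₂] {f : M →L[R] M₂} (hf : f.IsInvertible) : (-f).IsInvertible := by
  obtain ⟨e, rfl⟩ := hf
  exact ⟨e.trans (.neg R), by ext; simp⟩

section

variable {V : Type*} [NormedAddCommGroup V] [InnerProductSpace ℂ V]

noncomputable def reInnerCLM (N : V) : V →L[ℝ] ℝ := reCLM ∘L (innerSL ℂ N).restrictScalars ℝ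

@[simp]
lemma reInnerCLM_apply (N v : V) : reInnerCLM N v = (⟪N, v⟫_ℂ).re := rfl

lemma HasStrictFDerivAt.re_inner_of_eq_zero {X : Type*} [NormedAddCommGroup X] [NormedSpace ℝ X]
    {N Z : X → V} {N' Z' : X →L[ℝ] V} {x₀ : X} (hN : HasStrictFDerivAt N N' x₀)
    (hZ : HasStrictFDerivAt Z Z' x₀) (hZ₀ : Z x₀ = 0) :
    HasStrictFDerivAt (fun x => (⟪N x, Z x⟫_ℂ).re) (reInnerCLM (N x₀) ∘L Z') x₀ :=
  (reCLM.hasStrictFDerivAt.comp x₀ (hN.inner ℂ hZ)).congr_fderiv <| by ext; simp [hZ₀]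

theorem eventually_exists_re_inner_eq_zero {E : Type*} [NormedAddCommGroup E] [NormedSpace ℝ E]
    [CompleteSpace E] [CompleteSpace V] {Φ N₁ N₂ : E → V} {Φ' N₁' N₂' : E →L[ℝ] V} {x₀ : E}
    (hΦ : HasStrictFDerivAt Φ Φ' x₀) (hN₁ : HasStrictFDerivAt N₁ N₁' x₀)
    (hN₂ : HasStrictFDerivAt N₂ N₂' x₀)
    (hinv : ((reInnerCLM (N₁ x₀)).prod (reInnerCLM (N₂ x₀)) ∘L Φ').IsInvertible) :
    ∀ᶠ z in 𝓝 (0 : V), ∃ x, (⟪N₁ x, Φ x₀ + z - Φ x⟫_ℂ).re = 0 ∧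
      (⟪N₂ x, Φ x₀ + z - Φ x⟫_ℂ).re = 0 := by
  set Z' := fst ℝ V E - Φ' ∘L snd ℝ V E
  have hZ : HasStrictFDerivAt (fun w : V × E => Φ x₀ + w.1 - Φ w.2) Z' (0, x₀) :=
    (hasStrictFDerivAt_fst.const_add _).sub (hΦ.comp _ hasStrictFDerivAt_snd)
  have hZ₀ : Φ x₀ + (0 : V) - Φ x₀ = 0 := by simp
  have hf := (hN₁.comp (0, x₀) hasStrictFDerivAt_snd).re_inner_of_eq_zero hZ hZ₀ |>.prodMk <|
    (hN₂.comp (0, x₀) hasStrictFDerivAt_snd).re_inner_of_eq_zero hZ hZ₀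
  have hpartial : ((reInnerCLM (N₁ x₀) ∘L Z').prod (reInnerCLM (N₂ x₀) ∘L Z')) ∘L inr ℝ V E =
      -((reInnerCLM (N₁ x₀)).prod (reInnerCLM (N₂ x₀)) ∘L Φ') := by
    ext <;> simp [Z']
  filter_upwards [hf.eventually_apply_implicitFunctionOfProdDomain (hpartial ▸ hinv.neg)]
    with z hz
  simp only [hZ₀, inner_zero_right, zero_re] at hz
  exact ⟨_, Prod.mk_eq_zero.1 hz⟩

noncomputable def cylinder (p : ℝ → V) (x : ℝ × ℝ) : V := cexp (I * x.2) • p x.1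

lemma hasStrictFDerivAt_cylinder {p : ℝ → V} {dp : V} {φ θ : ℝ} (hp : HasStrictDerivAt p dp φ) :
    HasStrictFDerivAt (cylinder p) ((fst ℝ ℝ ℝ).smulRight (cexp (I * θ) • dp) +
      (snd ℝ ℝ ℝ).smulRight ((I * cexp (I * θ)) • p φ)) (φ, θ) := by
  have he : HasStrictDerivAt (fun t : ℝ => cexp (I * t)) (I * cexp (I * θ)) θ := by
    simpa [mul_comm] using ((ofRealCLM.hasStrictDerivAt (x := θ)).const_mul I).cexp
  refine ((he.hasStrictFDerivAt.comp (φ, θ) (hasStrictFDerivAt_snd (𝕜 := ℝ))).smul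
    (hp.hasStrictFDerivAt.comp (φ, θ) (hasStrictFDerivAt_fst (𝕜 := ℝ)))).congr_fderiv ?_
  ext <;> simp

lemma reInnerCLM_prod_comp_eq_prodComm {N₁ N₂ u w : V} (h₁u : (⟪N₁, u⟫_ℂ).re = 0)
    (h₁w : (⟪N₁, w⟫_ℂ).re = 1) (h₂u : (⟪N₂, u⟫_ℂ).re = 1) (h₂w : (⟪N₂, w⟫_ℂ).re = 0) :
    (reInnerCLM N₁).prod (reInnerCLM N₂) ∘L ((fst ℝ ℝ ℝ).smulRight u + (snd ℝ ℝ ℝ).smulRight w) =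
      ContinuousLinearEquiv.prodComm ℝ ℝ ℝ := by
  ext <;> simp [h₁u, h₁w, h₂u, h₂w]

end

/-- Re-orthogonalization via the implicit function theorem: any point near the
cylinder (φ,θ) ↦ e^{iθ}p(φ) can be written as e^{iθ̂}p(φ̂) + ẑ with ẑ orthogonal
(in the real inner product) to n⁽¹⁾, n⁽²⁾ at (φ̂,θ̂). -/
theorem stmt17 {n : ℕ} (p : ℝ → EuclideanSpace ℂ (Fin n)) (dp : EuclideanSpace ℂ (Fin n))
    (n1 n2 : ℝ → ℝ → EuclideanSpace ℂ (Fin n)) (φb θb : ℝ)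
    (hp : ContDiffAt ℝ 1 p φb) (hdp : HasDerivAt p dp φb)
    (hn1 : ContDiffAt ℝ 1 (fun x : ℝ × ℝ => n1 x.1 x.2) (φb, θb))
    (hn2 : ContDiffAt ℝ 1 (fun x : ℝ × ℝ => n2 x.1 x.2) (φb, θb))
    (hN11 : (inner ℂ (n1 φb θb)
      ((Complex.I * Complex.exp (Complex.I * (θb : ℂ))) • p φb) : ℂ).re = 1)
    (hN12 : (inner ℂ (n1 φb θb) (Complex.exp (Complex.I * (θb : ℂ)) • dp) : ℂ).re = 0)
    (hN21 : (inner ℂ (n2 φb θb)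
      ((Complex.I * Complex.exp (Complex.I * (θb : ℂ))) • p φb) : ℂ).re = 0)
    (hN22 : (inner ℂ (n2 φb θb) (Complex.exp (Complex.I * (θb : ℂ)) • dp) : ℂ).re = 1) :
    ∃ μ0 > (0 : ℝ), ∀ zb : EuclideanSpace ℂ (Fin n), ‖zb‖ < μ0 →
      ∃ φh θh : ℝ, ∃ zh : EuclideanSpace ℂ (Fin n),
        Complex.exp (Complex.I * (θb : ℂ)) • p φb + zb
          = Complex.exp (Complex.I * (θh : ℂ)) • p φh + zh ∧
        (inner ℂ (n1 φh θh) zh : ℂ).re = 0 ∧ (inner ℂ (n2 φh θh) zh : ℂ).re = 0 := by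
  have hps : HasStrictDerivAt p dp φb := hdp.deriv ▸ hp.hasStrictDerivAt one_ne_zero
  have hinv := reInnerCLM_prod_comp_eq_prodComm hN12 hN11 hN22 hN21 ▸
    ContinuousLinearMap.isInvertible_equiv
  obtain ⟨μ0, hμ0, hsolve⟩ := Metric.eventually_nhds_iff.1 <|
    eventually_exists_re_inner_eq_zero (hasStrictFDerivAt_cylinder hps)
      (hn1.hasStrictFDerivAt one_ne_zero) (hn2.hasStrictFDerivAt one_ne_zero) hinv
  refine ⟨μ0, hμ0, fun zb hzb => ?_⟩
  obtain ⟨⟨φh, θh⟩, h₁, h₂⟩ := hsolve (by rwa [dist_zero_right])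
  exact ⟨φh, θh, _, (add_sub_cancel _ _).symm, h₁, h₂⟩
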